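/- If the AC2-formula F (built for candidate cause X⃗ = x⃗ with each cause variable forced to ¬xᵢ) is unsatisfiable, then there is no set W⃗ of endogenous variables such that (M,u⃗) ⊨ [X⃗ ← ¬x⃗, W⃗ ← w⃗]¬φ with w⃗ the actual values of W⃗; combined with the lemma that in Boolean models the AC2 witness setting must be x⃗′ = ¬x⃗, this implies AC2 fails for X⃗ = x⃗. -/

import Mathlib

/-
A solution of `[X⃗ ← x⃗', W⃗ ← w⃗]` with `w⃗` the actual values satisfies every clause of `F` except
possibly the literals `Xᵢ = ¬xᵢ`: a variable in `W⃗` keeps its actual value and any other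
non-cause variable follows its equation. The negation lemma supplies `x⃗' = ¬x⃗`, so any AC2
witness would be a model of `F`.
-/

/-- A Boolean causal model: each endogenous variable `v : V` has a structural
equation `F v` computing its value from the exogenous assignment and the
values of the other endogenous variables. -/
structure CausalModel (U V : Type) where
  F : V → (U → Bool) → (V → Bool) → Bool

/-- `a` is a solution of the model `M` under context `u` and intervention `I`
(`I v = some b` means `v` has been set to the constant `b`). -/
def Solves {U V : Type} (M : CausalModel U V) (u : U → Bool) (I : V → Option Bool)
    (a : V → Bool) : Prop :=
  ∀ v, a v = (I v).getD (M.F v u a)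

/-- The intervention `[X⃗ ← x⃗', W⃗ ← w⃗]`. -/
def ivn {V : Type} [DecidableEq V] (Xs : Finset V) (x' : V → Bool) (W : Finset V)
    (w : V → Bool) : V → Option Bool :=
  fun v => if v ∈ Xs then some (x' v) else if v ∈ W then some (w v) else none

/-- AC1: the cause and the effect hold in the actual evaluation `act`. -/
def AC1 {U V : Type} (_M : CausalModel U V) (_u : U → Bool) (act : V → Bool)
    (Xs : Finset V) (x : V → Bool) (φ : (V → Bool) → Prop) : Prop :=
  (∀ v ∈ Xs, act v = x v) ∧ φ act

/-- AC2: some contingency `W⃗` (fixed at its actual values) and some setting `x⃗'`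
of the cause variables make `¬φ` hold. -/
def AC2 {U V : Type} [DecidableEq V] (M : CausalModel U V) (u : U → Bool) (act : V → Bool)
    (Xs : Finset V) (φ : (V → Bool) → Prop) : Prop :=
  ∃ (W : Finset V) (x' a : V → Bool), Solves M u (ivn Xs x' W act) a ∧ ¬ φ a

/-- AC3: minimality — no strict subset of the cause satisfies AC1 and AC2. -/
def AC3 {U V : Type} [DecidableEq V] (M : CausalModel U V) (u : U → Bool) (act : V → Bool)
    (Xs : Finset V) (x : V → Bool) (φ : (V → Bool) → Prop) : Prop :=
  ∀ Xs' : Finset V, Xs' ⊂ Xs → ¬ (AC1 M u act Xs' x φ ∧ AC2 M u act Xs' φ)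

/-- Modified Halpern–Pearl actual cause. -/
def IsCause {U V : Type} [DecidableEq V] (M : CausalModel U V) (u : U → Bool) (act : V → Bool)
    (Xs : Finset V) (x : V → Bool) (φ : (V → Bool) → Prop) : Prop :=
  AC1 M u act Xs x φ ∧ AC2 M u act Xs φ ∧ AC3 M u act Xs x φ

/-- Satisfaction of the SAT-encoding formula `F` for AC2: `¬φ` holds, every
endogenous variable outside the candidate cause either follows its equation or
keeps its actual value, and every cause variable is flipped. (The exogenous
literals are encoded by evaluating the equations at the fixed context `u`.) -/
def FSat {U V : Type} (M : CausalModel U V) (u : U → Bool) (act : V → Bool)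
    (Xs : Finset V) (x : V → Bool) (φ : (V → Bool) → Prop) (a : V → Bool) : Prop :=
  ¬ φ a ∧ (∀ v, v ∉ Xs → (a v = M.F v u a ∨ a v = act v)) ∧ (∀ v ∈ Xs, a v = ! x v)

/-- Satisfaction of the SAT-encoding formula `G` for AC3: as `F`, but the cause
variables are only constrained by the tautological disjunction `Xᵢ ∨ ¬Xᵢ`. -/
def GSat {U V : Type} (M : CausalModel U V) (u : U → Bool) (act : V → Bool)
    (Xs : Finset V) (_x : V → Bool) (φ : (V → Bool) → Prop) (a : V → Bool) : Prop :=
  ¬ φ a ∧ (∀ v, v ∉ Xs → (a v = M.F v u a ∨ a v = act v)) ∧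
    (∀ v ∈ Xs, a v = true ∨ a v = false)

section Intervention

variable {U V : Type} [DecidableEq V] {M : CausalModel U V} {u : U → Bool}
  {Xs W : Finset V} {x' w a : V → Bool}

theorem Solves.ivn_eq_of_mem (hs : Solves M u (ivn Xs x' W w) a) {v : V} (hv : v ∈ Xs) :
    a v = x' v := by
  simpa [ivn, hv] using hs v

theorem Solves.ivn_eq_or_eq_of_notMem (hs : Solves M u (ivn Xs x' W w) a) {v : V}
    (hv : v ∉ Xs) : a v = M.F v u a ∨ a v = w v := by
  have hv' := hs v
  by_cases hw : v ∈ W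
  · exact Or.inr (by simpa [ivn, hv, hw] using hv')
  · exact Or.inl (by simpa [ivn, hv, hw] using hv')

end Intervention

theorem fSat_of_solves_ivn {U V : Type} [DecidableEq V] {M : CausalModel U V} {u : U → Bool}
    {act x x' a : V → Bool} {Xs W : Finset V} {φ : (V → Bool) → Prop}
    (hs : Solves M u (ivn Xs x' W act) a) (hφ : ¬ φ a) (hx' : ∀ v ∈ Xs, x' v = ! x v) :
    FSat M u act Xs x φ a :=
  ⟨hφ, fun _ hv => hs.ivn_eq_or_eq_of_notMem hv,
    fun v hv => (hs.ivn_eq_of_mem hv).trans (hx' v hv)⟩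

theorem stmt8_general {U V : Type} [DecidableEq V] (M : CausalModel U V) (u : U → Bool)
    (act : V → Bool)
    (Xs : Finset V) (x : V → Bool) (φ : (V → Bool) → Prop)
    (hunsat : ¬ ∃ a, FSat M u act Xs x φ a)
    (hflip : ∀ (W : Finset V) (x' a : V → Bool),
      Solves M u (ivn Xs x' W act) a → ¬ φ a → ∀ v ∈ Xs, x' v = ! x v) :
    (¬ ∃ (W : Finset V) (a : V → Bool),
        Solves M u (ivn Xs (fun v => ! x v) W act) a ∧ ¬ φ a) ∧
    ¬ AC2 M u act Xs φ := by
  constructor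
  · rintro ⟨W, a, hs, hφ⟩
    exact hunsat ⟨a, fSat_of_solves_ivn hs hφ fun _ _ => rfl⟩
  · rintro ⟨W, x', a, hs, hφ⟩
    exact hunsat ⟨a, fSat_of_solves_ivn hs hφ (hflip W x' a hs hφ)⟩

/-- If the AC2-formula `F` is unsatisfiable, then no contingency `W⃗` makes the
flipped counterfactual `(M,u⃗) ⊨ [X⃗ ← ¬x⃗, W⃗ ← w⃗]¬φ` hold; combined with the
negation lemma (every AC2 witness flips all cause variables), AC2 fails. -/
theorem stmt8 {U V : Type} [DecidableEq V] (M : CausalModel U V) (u : U → Bool)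
    (act : V → Bool) (hact : Solves M u (fun _ => none) act)
    (huniq : ∀ I : V → Option Bool, ∃! a, Solves M u I a)
    (Xs : Finset V) (x : V → Bool) (φ : (V → Bool) → Prop)
    (hAC1 : AC1 M u act Xs x φ)
    (hunsat : ¬ ∃ a, FSat M u act Xs x φ a)
    (hflip : ∀ (W : Finset V) (x' a : V → Bool),
      Solves M u (ivn Xs x' W act) a → ¬ φ a → ∀ v ∈ Xs, x' v = ! x v) :
    (¬ ∃ (W : Finset V) (a : V → Bool),
        Solves M u (ivn Xs (fun v => ! x v) W act) a ∧ ¬ φ a) ∧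
    ¬ AC2 M u act Xs φ :=
  stmt8_general M u act Xs x φ hunsat hflip
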